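/- Let F : ℝ → ℝ be of class C² with F(t) ≥ 0 for all t, and suppose liminf_{|t|→∞} F(t)/t² ≥ α for some α > 0. Then for any T > 0 and any q < √(2α), the energy J_q is bounded from below on A_T; that is, there exists m ∈ ℝ such that J_q(u) ≥ m for every C² function u : [0,T] → ℝ with u'(0) = u'(T) = 0. -/

import Mathlib

open Filter Real intervalIntegral

/-!
Integrating by parts with `u'(0) = u'(T) = 0` gives `∫ u'² = -∫ u u''`, so
`J_q(u) = ∫ (u''²/2 + (q/2) u u'' + F(u)) ≥ ∫ (F(u) - (q²/8) u²)` by completing the square.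
The liminf hypothesis gives `F(t) ≥ (q²/8) t² - C` for all `t` as soon as `q² < 8α`, so
`J_q(u) ≥ -CT`. Since `J_q` is antitone in `q`, a negative `q` reduces to `q = 0`.
-/

noncomputable def energy (F : ℝ → ℝ) (q T : ℝ) (u : ℝ → ℝ) : ℝ :=
  ∫ x in (0:ℝ)..T, (iteratedDeriv 2 u x ^ 2 / 2 - q * deriv u x ^ 2 / 2 + F (u x))

theorem exists_mul_sq_sub_le_of_le_liminf {F : ℝ → ℝ} (hF : ∀ t, 0 ≤ F t) {α β : ℝ}
    (hβ : 0 ≤ β) (hβα : β < α)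
    (h : α ≤ liminf (fun t : ℝ => F t / t ^ 2) (atBot ⊔ atTop)) :
    ∃ C, ∀ t, β * t ^ 2 - C ≤ F t := by
  have hbdd : IsBoundedUnder (· ≥ ·) (atBot ⊔ atTop) (fun t : ℝ => F t / t ^ 2) :=
    isBoundedUnder_of ⟨0, fun t => div_nonneg (hF t) (sq_nonneg t)⟩
  have hev := eventually_lt_of_lt_liminf (hβα.trans_le h) hbdd
  rw [← comap_abs_atTop, eventually_comap, eventually_atTop] at hev
  obtain ⟨R, hR⟩ := hev
  refine ⟨β * R ^ 2, fun t => ?_⟩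
  rcases lt_or_ge |t| R with ht | ht
  · have : t ^ 2 ≤ R ^ 2 := sq_le_sq.mpr (ht.le.trans (le_abs_self R))
    nlinarith [hF t]
  · have hlt : β < F t / t ^ 2 := hR |t| ht t rfl
    -- `t = 0` is impossible here: `F 0 / 0 = 0 ≤ β`.
    have ht2 : 0 < t ^ 2 := by
      rcases (sq_nonneg t).lt_or_eq with h2 | h2
      · exact h2
      · rw [← h2, div_zero] at hlt; linarith
    nlinarith [(lt_div_iff₀ ht2).mp hlt, sq_nonneg R]

section Energy

variable {F : ℝ → ℝ} {u : ℝ → ℝ} {T : ℝ}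

theorem hasDerivAt_deriv_iteratedDeriv_two (hu : ContDiff ℝ 2 u) (x : ℝ) :
    HasDerivAt (deriv u) (iteratedDeriv 2 u x) x := by
  have hd : Differentiable ℝ (deriv u) := by
    simpa only [iteratedDeriv_one] using hu.differentiable_iteratedDeriv 1 (by norm_num)
  rw [iteratedDeriv_succ, iteratedDeriv_one]
  exact (hd x).hasDerivAt

theorem integral_deriv_sq_eq_neg_integral_mul_iteratedDeriv_two (hu : ContDiff ℝ 2 u)
    (h0 : deriv u 0 = 0) (hT : deriv u T = 0) :
    ∫ x in (0:ℝ)..T, deriv u x ^ 2 = -∫ x in (0:ℝ)..T, u x * iteratedDeriv 2 u x := by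
  rw [integral_mul_deriv_eq_deriv_mul
    (fun x _ => (hu.differentiable (by norm_num) x).hasDerivAt)
    (fun x _ => hasDerivAt_deriv_iteratedDeriv_two hu x)
    ((hu.continuous_deriv (by norm_num)).intervalIntegrable 0 T)
    ((hu.continuous_iteratedDeriv 2 le_rfl).intervalIntegrable 0 T), h0, hT]
  simp only [mul_zero, sub_zero, zero_sub, neg_neg, sq]

theorem energy_eq_integral_of_deriv_eq_zero (hF : Continuous F) (hu : ContDiff ℝ 2 u)
    (h0 : deriv u 0 = 0) (hT : deriv u T = 0) (q : ℝ) :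
    energy F q T u =
      ∫ x in (0:ℝ)..T, (iteratedDeriv 2 u x ^ 2 / 2 + q / 2 * (u x * iteratedDeriv 2 u x)
        + F (u x)) := by
  have hu0 := hu.continuous
  have hu1 := hu.continuous_deriv (by norm_num)
  have hu2 := hu.continuous_iteratedDeriv 2 le_rfl
  have hsplit : ∀ c : ℝ, ∀ f : ℝ → ℝ, Continuous f →
      ∫ x in (0:ℝ)..T, (iteratedDeriv 2 u x ^ 2 / 2 + c * f x + F (u x)) =
        (∫ x in (0:ℝ)..T, (iteratedDeriv 2 u x ^ 2 / 2 + F (u x))) + c * ∫ x in (0:ℝ)..T, f x :=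
    fun c f hf => by
      rw [← integral_const_mul]
      refine (integral_congr fun x _ => ?_).trans (integral_add
        ((((hu2.pow 2).div_const 2).add (hF.comp hu0)).intervalIntegrable 0 T)
        ((continuous_const.mul hf).intervalIntegrable 0 T))
      ring
  have hJ : energy F q T u =
      ∫ x in (0:ℝ)..T, (iteratedDeriv 2 u x ^ 2 / 2 + (-q / 2) * deriv u x ^ 2 + F (u x)) :=
    integral_congr fun x _ => by ring
  calc energy F q T u
      = (∫ x in (0:ℝ)..T, (iteratedDeriv 2 u x ^ 2 / 2 + F (u x)))
          + (-q / 2) * ∫ x in (0:ℝ)..T, deriv u x ^ 2 := hJ.trans (hsplit _ _ (hu1.pow 2))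
    _ = (∫ x in (0:ℝ)..T, (iteratedDeriv 2 u x ^ 2 / 2 + F (u x)))
          + q / 2 * ∫ x in (0:ℝ)..T, u x * iteratedDeriv 2 u x := by
        rw [integral_deriv_sq_eq_neg_integral_mul_iteratedDeriv_two hu h0 hT]
        ring
    _ = _ := (hsplit _ _ (hu0.mul hu2)).symm

theorem antitone_energy (hF : Continuous F) (hu : ContDiff ℝ 2 u) (hT : 0 ≤ T) :
    Antitone fun q => energy F q T u := by
  intro q p hqp
  have hu0 := hu.continuous
  have hu1 := hu.continuous_deriv (by norm_num)
  have hu2 := hu.continuous_iteratedDeriv 2 le_rfl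
  have hcont : ∀ r : ℝ, Continuous fun x =>
      iteratedDeriv 2 u x ^ 2 / 2 - r * deriv u x ^ 2 / 2 + F (u x) := fun r => by fun_prop
  refine integral_mono_on hT ((hcont p).intervalIntegrable 0 T) ((hcont q).intervalIntegrable 0 T)
    fun x _ => ?_
  nlinarith [mul_le_mul_of_nonneg_right hqp (sq_nonneg (deriv u x))]

theorem neg_mul_le_energy (hF : Continuous F) (hu : ContDiff ℝ 2 u)
    (h0 : deriv u 0 = 0) (hT0 : deriv u T = 0) (hT : 0 ≤ T) {q C : ℝ}
    (hC : ∀ t, q ^ 2 / 8 * t ^ 2 - C ≤ F t) : -(C * T) ≤ energy F q T u := by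
  have hu0 := hu.continuous
  have hu2 := hu.continuous_iteratedDeriv 2 le_rfl
  rw [energy_eq_integral_of_deriv_eq_zero hF hu h0 hT0]
  calc -(C * T) = ∫ _ in (0:ℝ)..T, -C := by simp [mul_comm]
    _ ≤ _ := integral_mono_on hT intervalIntegrable_const
      ((by fun_prop : Continuous fun x => iteratedDeriv 2 u x ^ 2 / 2
        + q / 2 * (u x * iteratedDeriv 2 u x) + F (u x)).intervalIntegrable 0 T)
      fun x _ => by nlinarith [sq_nonneg (iteratedDeriv 2 u x + q / 2 * u x), hC (u x)]

end Energy

/-- Let `F` be `C²`, nonnegative, with `liminf_{|t|→∞} F(t)/t² ≥ α` for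
some `α > 0`. Then for any `T > 0` and any `q < √(2α)` the energy `J_q` is bounded from
below on `A_T = { u ∈ C²([0,T]) : u'(0) = u'(T) = 0 }`. -/
theorem stmt14 (F : ℝ → ℝ) (hF : ContDiff ℝ 2 F)
    (hFnonneg : ∀ t : ℝ, 0 ≤ F t)
    (α : ℝ) (hα : 0 < α)
    (hliminf : α ≤ Filter.liminf (fun t : ℝ => F t / t ^ 2) (Filter.atBot ⊔ Filter.atTop))
    (T : ℝ) (hT : 0 < T) (q : ℝ) (hq : q < Real.sqrt (2 * α)) :
    ∃ m : ℝ, ∀ u : ℝ → ℝ, ContDiff ℝ 2 u → deriv u 0 = 0 → deriv u T = 0 →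
      m ≤ ∫ x in (0:ℝ)..T,
        ((iteratedDeriv 2 u x) ^ 2 / 2 - q * (deriv u x) ^ 2 / 2 + F (u x)) := by
  set p := max q 0
  have hp : p ^ 2 < 2 * α :=
    (Real.lt_sqrt (le_max_right q 0)).mp (max_lt hq (Real.sqrt_pos.mpr (by linarith)))
  obtain ⟨C, hC⟩ :=
    exists_mul_sq_sub_le_of_le_liminf hFnonneg (by positivity : 0 ≤ p ^ 2 / 8) (by linarith)
      hliminf
  refine ⟨-(C * T), fun u hu h0 hT0 => ?_⟩
  calc -(C * T) ≤ energy F p T u := neg_mul_le_energy hF.continuous hu h0 hT0 hT.le hC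
    _ ≤ energy F q T u := antitone_energy hF.continuous hu hT.le (le_max_left q 0)
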